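/- Under Assumption A1 and the threshold condition (T), let z be a d-stationary point of (P0) with Θ(z) ≤ γ̄. Then Θ′(z;d) > 0 for every direction d ∉ T_{F₀}(z), and consequently {d ∈ ℝ^{N̄} : Θ′(z;d) = 0} = {d ∈ T_{F₀}(z) : F′(z;d) = 0}. -/

import Mathlib

open Filter Topology

noncomputable section

section General

variable {E F : Type*} [NormedAddCommGroup E] [NormedSpace ℝ E]
  [NormedAddCommGroup F] [NormedSpace ℝ F]

/-- `f` has directional derivative `y` at `x` along direction `d`. -/
def HasDirDeriv (f : E → F) (x d : E) (y : F) : Prop :=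
  Tendsto (fun τ : ℝ => τ⁻¹ • (f (x + τ • d) - f x)) (𝓝[>] 0) (𝓝 y)

/-- `f` has first- and second-order directional derivatives `y₁`, `y₂` at `x` along `d`. -/
def HasDirDeriv2 (f : E → F) (x d : E) (y₁ y₂ : F) : Prop :=
  HasDirDeriv f x d y₁ ∧
    Tendsto (fun τ : ℝ => (τ ^ 2 / 2)⁻¹ • (f (x + τ • d) - f x - τ • y₁)) (𝓝[>] 0) (𝓝 y₂)

open Classical in
def dirD (f : E → F) (x d : E) : F :=
  if h : ∃ y, HasDirDeriv f x d y then h.choose else 0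

open Classical in
def dirD2 (f : E → F) (x d : E) : F :=
  if h : ∃ y, Tendsto
      (fun τ : ℝ => (τ ^ 2 / 2)⁻¹ • (f (x + τ • d) - f x - τ • dirD f x d)) (𝓝[>] 0) (𝓝 y)
  then h.choose else 0

/-- The (Bouligand) tangent cone of `s` at `x`. -/
def tangentCone (s : Set E) (x : E) : Set E :=
  {d | ∃ (z : ℕ → E) (τ : ℕ → ℝ), (∀ k, z k ∈ s) ∧ Tendsto z atTop (𝓝 x) ∧
    (∀ k, 0 < τ k) ∧ Tendsto τ atTop (𝓝 0) ∧
    Tendsto (fun k => (τ k)⁻¹ • (z k - x)) atTop (𝓝 d)}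

/-- The radial cone of `s` at `x`. -/
def radialCone (s : Set E) (x : E) : Set E :=
  {d | ∃ τ : ℕ → ℝ, (∀ k, 0 < τ k) ∧ Tendsto τ atTop (𝓝 0) ∧ ∀ k, x + τ k • d ∈ s}

/-- `f` is twice semidifferentiable (in the sense of Rockafellar-Wets / Cui-Pang). -/
def TwiceSemidiff (f : E → ℝ) : Prop :=
  ∀ x d : E, ∃ y₁ y₂ : ℝ,
    Tendsto (fun p : ℝ × E => (f (x + p.1 • p.2) - f x) / p.1)
      ((𝓝[>] 0) ×ˢ 𝓝 d) (𝓝 y₁) ∧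
    Tendsto (fun p : ℝ × E => (f (x + p.1 • p.2) - f x - p.1 * dirD f x p.2) / (p.1 ^ 2 / 2))
      ((𝓝[>] 0) ×ˢ 𝓝 d) (𝓝 y₂)

end General
section Multi

/-- The parameter space `ℝⁿ`. -/
abbrev TSp (n : ℕ) : Type := EuclideanSpace ℝ (Fin n)

/-- The space of auxiliary variables `u = (u₁, …, u_L)`. -/
abbrev USp (L : ℕ) (N : Fin L → ℕ) : Type := EuclideanSpace ℝ (Σ ℓ : Fin L, Fin (N ℓ))

/-- The full variable space `z = (θ, u)` with Euclidean norm. -/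
abbrev ZSp (n L : ℕ) (N : Fin L → ℕ) : Type :=
  EuclideanSpace ℝ (Fin n ⊕ Σ ℓ : Fin L, Fin (N ℓ))

variable {n L : ℕ} {N : Fin L → ℕ}

/-- The `θ`-block of `z`. -/
def thOf (z : ZSp n L N) : TSp n := WithLp.toLp 2 (fun i => z (Sum.inl i))

/-- The `u`-block of `z`. -/
def uOf (z : ZSp n L N) : USp L N := WithLp.toLp 2 (fun j => z (Sum.inr j))

/-- The block `u_ℓ` of `z`. -/
def uBlk (z : ZSp n L N) (ℓ : Fin L) : EuclideanSpace ℝ (Fin (N ℓ)) :=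
  WithLp.toLp 2 (fun i => z (Sum.inr ⟨ℓ, i⟩))

/-- The truncation `(u₁, …, u_{ℓ-1}, 0, …, 0)` of the `u`-block of `z`. -/
def uLow (z : ZSp n L N) (ℓ : Fin L) : USp L N :=
  WithLp.toLp 2 (fun j => if j.1 < ℓ then z (Sum.inr j) else 0)

/-- `ψ ℓ` only depends on `θ` and the blocks `u_j` with `j < ℓ`; this encodes that
`ψ_{ℓ-1}` is a function of `(θ, u₁, …, u_{ℓ-1})`. -/
def DepBelow (ψ : (ℓ : Fin L) → ZSp n L N → EuclideanSpace ℝ (Fin (N ℓ))) : Prop :=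
  ∀ ℓ : Fin L, ∀ z z' : ZSp n L N, thOf z = thOf z' →
    (∀ j : Fin L, j < ℓ → uBlk z j = uBlk z' j) → ψ ℓ z = ψ ℓ z'

/-- The feasible set `F₀ = {z : u_ℓ = ψ_{ℓ-1}(θ, u₁, …, u_{ℓ-1})}`. -/
def Feas (ψ : (ℓ : Fin L) → ZSp n L N → EuclideanSpace ℝ (Fin (N ℓ))) : Set (ZSp n L N) :=
  {z | ∀ ℓ, uBlk z ℓ = ψ ℓ z}

/-- The objective `F(z) = g(u) + λ‖θ‖²` of problem (P0). -/
def Fobj (g : USp L N → ℝ) (lam : ℝ) (z : ZSp n L N) : ℝ :=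
  g (uOf z) + lam * ‖thOf z‖ ^ 2

/-- The objective `Θ(z) = F(z) + Σ_ℓ β_ℓ ‖u_ℓ − ψ_{ℓ-1}(θ, u₁, …, u_{ℓ-1})‖₁`
of the penalty problem (P1). -/
def Th (g : USp L N → ℝ) (lam : ℝ)
    (ψ : (ℓ : Fin L) → ZSp n L N → EuclideanSpace ℝ (Fin (N ℓ))) (β : Fin L → ℝ)
    (z : ZSp n L N) : ℝ :=
  Fobj g lam z + ∑ ℓ, β ℓ * ∑ i, |uBlk z ℓ i - ψ ℓ z i|

/-- The `ε`-enlargement `{z : Θ(z) ≤ γ} + ε·B(0,1)` of a level set of `Θ`. -/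
def LevE (g : USp L N → ℝ) (lam : ℝ)
    (ψ : (ℓ : Fin L) → ZSp n L N → EuclideanSpace ℝ (Fin (N ℓ))) (β : Fin L → ℝ)
    (γ ε : ℝ) : Set (ZSp n L N) :=
  {w | ∃ v : ZSp n L N, Th g lam ψ β v ≤ γ ∧ ‖w - v‖ ≤ ε}

end Multi

section AuxGeneral
open Filter Topology

variable {E F : Type*} [NormedAddCommGroup E] [NormedSpace ℝ E]
  [NormedAddCommGroup F] [NormedSpace ℝ F]

theorem HasDirDeriv.dirD_eq {f : E → F} {x d : E} {y : F} (h : HasDirDeriv f x d y) :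
    dirD f x d = y := by
  have hex : ∃ y, HasDirDeriv f x d y := ⟨y, h⟩
  rw [dirD, dif_pos hex]
  exact tendsto_nhds_unique hex.choose_spec h

theorem HasDirDeriv.congr_dir {f : E → F} {x d d' : E} {y : F} (h : HasDirDeriv f x d y)
    (hd : ∀ τ : ℝ, f (x + τ • d') = f (x + τ • d)) : HasDirDeriv f x d' y := by
  unfold HasDirDeriv at h ⊢
  simpa only [hd] using h

theorem bdiff_seq {f : E → F} {x d : E} {y : F} (hf : LocallyLipschitz f)
    (hd : HasDirDeriv f x d y) {w : ℕ → E} {τ : ℕ → ℝ} (hτ : ∀ k, 0 < τ k)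
    (hτ0 : Tendsto τ atTop (𝓝 0))
    (hw : Tendsto (fun k => (τ k)⁻¹ • (w k - x)) atTop (𝓝 d)) :
    Tendsto (fun k => (τ k)⁻¹ • (f (w k) - f x)) atTop (𝓝 y) := by
  obtain ⟨C, t, ht, hC⟩ := hf x
  have hτS : Tendsto τ atTop (𝓝[>] (0:ℝ)) :=
    tendsto_nhdsWithin_iff.2 ⟨hτ0, Eventually.of_forall hτ⟩
  have h1 : Tendsto (fun k => (τ k)⁻¹ • (f (x + τ k • d) - f x)) atTop (𝓝 y) := hd.comp hτS
  have hq : Tendsto (fun k => τ k • ((τ k)⁻¹ • (w k - x))) atTop (𝓝 ((0:ℝ) • d)) :=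
    hτ0.smul hw
  have heq : (fun k => τ k • ((τ k)⁻¹ • (w k - x))) = fun k => w k - x := by
    funext k; rw [smul_inv_smul₀ (hτ k).ne']
  rw [heq, zero_smul] at hq
  have hwx : Tendsto w atTop (𝓝 x) := by
    have h2 := hq.add_const x
    simpa using h2
  have hxd : Tendsto (fun k => x + τ k • d) atTop (𝓝 x) := by
    have h3 : Tendsto (fun k => τ k • d) atTop (𝓝 ((0:ℝ) • d)) := hτ0.smul_const d
    rw [zero_smul] at h3
    simpa using tendsto_const_nhds.add h3
  have hmem1 : ∀ᶠ k in atTop, w k ∈ t := hwx.eventually_mem ht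
  have hmem2 : ∀ᶠ k in atTop, x + τ k • d ∈ t := hxd.eventually_mem ht
  have key : Tendsto (fun k => (τ k)⁻¹ • (f (w k) - f (x + τ k • d))) atTop (𝓝 0) := by
    apply squeeze_zero_norm'
      (a := fun k => (C : ℝ) * ‖(τ k)⁻¹ • (w k - x) - d‖)
    · filter_upwards [hmem1, hmem2] with k hk1 hk2
      have hd1 : dist (f (w k)) (f (x + τ k • d)) ≤ (C : ℝ) * dist (w k) (x + τ k • d) :=
        hC.dist_le_mul _ hk1 _ hk2
      rw [dist_eq_norm, dist_eq_norm] at hd1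
      have hτk := (hτ k)
      calc ‖(τ k)⁻¹ • (f (w k) - f (x + τ k • d))‖
          = (τ k)⁻¹ * ‖f (w k) - f (x + τ k • d)‖ := by
            rw [norm_smul, Real.norm_eq_abs, abs_inv, abs_of_pos hτk]
        _ ≤ (τ k)⁻¹ * ((C : ℝ) * ‖w k - (x + τ k • d)‖) := by
            exact mul_le_mul_of_nonneg_left hd1 (by positivity)
        _ = (C : ℝ) * ‖(τ k)⁻¹ • (w k - (x + τ k • d))‖ := by
            rw [norm_smul, Real.norm_eq_abs, abs_inv, abs_of_pos hτk]; ring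
        _ = (C : ℝ) * ‖(τ k)⁻¹ • (w k - x) - d‖ := by
            congr 1
            rw [show w k - (x + τ k • d) = (w k - x) - τ k • d by abel, smul_sub,
              inv_smul_smul₀ hτk.ne']
    · have := ((hw.sub_const d).norm).const_mul (C : ℝ)
      simpa using this
  have hfin := key.add h1
  rw [zero_add] at hfin
  have heq2 : (fun k => (τ k)⁻¹ • (f (w k) - f (x + τ k • d)) +
      (τ k)⁻¹ • (f (x + τ k • d) - f x)) = fun k => (τ k)⁻¹ • (f (w k) - f x) := by
    funext k; rw [← smul_add, sub_add_sub_cancel]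
  rwa [heq2] at hfin

end AuxGeneral

section AuxMulti
open Filter Topology

theorem tendsto_euclid_iff {ι : Type*} [Fintype ι] {α : Type*} {l : Filter α}
    {f : α → EuclideanSpace ℝ ι} {x : EuclideanSpace ℝ ι} :
    Tendsto f l (𝓝 x) ↔ ∀ i, Tendsto (fun a => f a i) l (𝓝 (x i)) := by
  rw [(EuclideanSpace.equiv ι ℝ).toHomeomorph.isInducing.tendsto_nhds_iff]
  exact tendsto_pi_nhds

theorem euclid_norm_le_sum_abs {ι : Type*} [Fintype ι] [DecidableEq ι]
    (v : EuclideanSpace ℝ ι) : ‖v‖ ≤ ∑ i, |v i| := by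
  have hv : v = ∑ i, EuclideanSpace.single i (v i) := by
    ext j
    rw [WithLp.ofLp_sum, Finset.sum_apply]
    simp [EuclideanSpace.single_apply]
  calc ‖v‖ = ‖∑ i, EuclideanSpace.single i (v i)‖ := by rw [← hv]
    _ ≤ ∑ i, ‖EuclideanSpace.single i (v i)‖ := norm_sum_le _ _
    _ = ∑ i, |v i| := by simp [EuclideanSpace.norm_single, Real.norm_eq_abs]

variable {n L : ℕ} {N : Fin L → ℕ}

/-- assemble a point of `ZSp` from its two blocks. -/
def mkZ (θ : TSp n) (u : USp L N) : ZSp n L N := WithLp.toLp 2 (Sum.elim θ u)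

/-- block of a `USp` vector. -/
def blkU (u : USp L N) (ℓ : Fin L) : EuclideanSpace ℝ (Fin (N ℓ)) := WithLp.toLp 2 (fun i => u ⟨ℓ, i⟩)

@[simp] lemma thOf_mkZ (θ : TSp n) (u : USp L N) : thOf (mkZ θ u) = θ := rfl
@[simp] lemma uOf_mkZ (θ : TSp n) (u : USp L N) : uOf (mkZ θ u) = u := rfl
@[simp] lemma uBlk_mkZ (θ : TSp n) (u : USp L N) (ℓ : Fin L) :
    uBlk (mkZ θ u) ℓ = blkU u ℓ := rfl
lemma mkZ_eta (z : ZSp n L N) : mkZ (thOf z) (uOf z) = z := by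
  ext j; cases j <;> rfl
@[simp] lemma thOf_add (a b : ZSp n L N) : thOf (a + b) = thOf a + thOf b := rfl
@[simp] lemma thOf_smul (c : ℝ) (a : ZSp n L N) : thOf (c • a) = c • thOf a := rfl
@[simp] lemma thOf_sub (a b : ZSp n L N) : thOf (a - b) = thOf a - thOf b := rfl
@[simp] lemma uOf_add (a b : ZSp n L N) : uOf (a + b) = uOf a + uOf b := rfl
@[simp] lemma uOf_smul (c : ℝ) (a : ZSp n L N) : uOf (c • a) = c • uOf a := rfl
@[simp] lemma uOf_sub (a b : ZSp n L N) : uOf (a - b) = uOf a - uOf b := rfl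
@[simp] lemma uBlk_add (a b : ZSp n L N) (ℓ : Fin L) :
    uBlk (a + b) ℓ = uBlk a ℓ + uBlk b ℓ := rfl
@[simp] lemma uBlk_smul (c : ℝ) (a : ZSp n L N) (ℓ : Fin L) :
    uBlk (c • a) ℓ = c • uBlk a ℓ := rfl
@[simp] lemma uBlk_sub (a b : ZSp n L N) (ℓ : Fin L) :
    uBlk (a - b) ℓ = uBlk a ℓ - uBlk b ℓ := rfl
@[simp] lemma blkU_uOf (z : ZSp n L N) (ℓ : Fin L) : blkU (uOf z) ℓ = uBlk z ℓ := rfl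

lemma uLow_add (a b : ZSp n L N) (ℓ : Fin L) : uLow (a + b) ℓ = uLow a ℓ + uLow b ℓ := by
  ext j
  show (if j.1 < ℓ then (a + b) (Sum.inr j) else 0) = _ + _
  unfold uLow
  by_cases h : j.1 < ℓ <;> simp [h]

lemma uLow_smul (c : ℝ) (a : ZSp n L N) (ℓ : Fin L) : uLow (c • a) ℓ = c • uLow a ℓ := by
  ext j
  show (if j.1 < ℓ then (c • a) (Sum.inr j) else 0) = _
  unfold uLow
  by_cases h : j.1 < ℓ <;> simp [h]

lemma uLow_sub (a b : ZSp n L N) (ℓ : Fin L) : uLow (a - b) ℓ = uLow a ℓ - uLow b ℓ := by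
  ext j
  show (if j.1 < ℓ then (a - b) (Sum.inr j) else 0) = _
  unfold uLow
  by_cases h : j.1 < ℓ <;> simp [h]

lemma norm_mkZ_zero (u : USp L N) : ‖(mkZ (0 : TSp n) u : ZSp n L N)‖ = ‖u‖ := by
  simp [EuclideanSpace.norm_eq, Fintype.sum_sum_type, mkZ]

/-- restriction of a `USp` vector to one block (zero elsewhere). -/
def maskU (w : USp L N) (ℓ : Fin L) : USp L N := WithLp.toLp 2 (fun j => if j.1 = ℓ then w j else 0)

lemma norm_le_sum_blkU (w : USp L N) (s : Finset (Fin L))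
    (hw : ∀ j : (Σ ℓ : Fin L, Fin (N ℓ)), w j ≠ 0 → j.1 ∈ s) :
    ‖w‖ ≤ ∑ ℓ ∈ s, ‖blkU w ℓ‖ := by
  have hrep : w = ∑ ℓ ∈ s, maskU w ℓ := by
    ext j
    rw [WithLp.ofLp_sum, Finset.sum_apply]
    unfold maskU
    rw [Finset.sum_ite_eq s j.1 (fun _ => w j)]
    by_cases hj : j.1 ∈ s
    · rw [if_pos hj]
    · rw [if_neg hj]
      by_contra hne
      exact hj (hw j hne)
  have hmask : ∀ ℓ : Fin L, ‖maskU w ℓ‖ = ‖blkU w ℓ‖ := by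
    intro ℓ
    rw [EuclideanSpace.norm_eq (maskU w ℓ), EuclideanSpace.norm_eq (blkU w ℓ)]
    congr 1
    rw [show (Finset.univ : Finset (Σ ℓ : Fin L, Fin (N ℓ))) = Finset.univ.sigma (fun _ => Finset.univ) from rfl]
    rw [Finset.sum_sigma]
    have hterm : ∀ ℓ' : Fin L,
        (∑ i : Fin (N ℓ'), ‖maskU w ℓ ⟨ℓ', i⟩‖ ^ 2)
        = if ℓ' = ℓ then ∑ i : Fin (N ℓ), ‖blkU w ℓ i‖ ^ 2 else 0 := by
      intro ℓ'
      by_cases h : ℓ' = ℓ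
      · subst h
        simp [blkU, maskU]
      · simp [maskU, h]
    rw [Finset.sum_congr rfl (fun ℓ' _ => hterm ℓ')]
    simp
  calc ‖w‖ = ‖∑ ℓ ∈ s, maskU w ℓ‖ := congrArg norm hrep
    _ ≤ ∑ ℓ ∈ s, ‖maskU w ℓ‖ := norm_sum_le _ _
    _ = ∑ ℓ ∈ s, ‖blkU w ℓ‖ := Finset.sum_congr rfl (fun ℓ _ => hmask ℓ)

end AuxMulti

section AuxIter
open Filter Topology

variable {n L : ℕ} {N : Fin L → ℕ}

lemma iterate_fixed {G : USp L N → USp L N}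
    (hG : ∀ (ℓ : Fin L) (v w : USp L N),
      (∀ j : Fin L, j < ℓ → blkU v j = blkU w j) → blkU (G v) ℓ = blkU (G w) ℓ)
    (v₀ : USp L N) : G (G^[L] v₀) = G^[L] v₀ := by
  have key : ∀ m : ℕ, ∀ ℓ : Fin L, (ℓ : ℕ) < m →
      blkU (G^[m+1] v₀) ℓ = blkU (G^[m] v₀) ℓ := by
    intro m
    induction m with
    | zero => intro ℓ h; omega
    | succ m ih =>
      intro ℓ hℓ
      rw [Function.iterate_succ_apply' G (m+1)]
      conv_rhs => rw [Function.iterate_succ_apply' G m]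
      refine hG ℓ _ _ (fun j hj => ih j ?_)
      have hj' : (j : ℕ) < (ℓ : ℕ) := hj
      omega
  have hfix : G^[L+1] v₀ = G^[L] v₀ := by
    ext j
    have h1 := key L j.1 j.1.2
    have h2 := congrArg (fun v : EuclideanSpace ℝ (Fin (N j.1)) => v j.2) h1
    simpa [blkU] using h2
  rw [← Function.iterate_succ_apply' G L v₀]
  exact hfix

lemma rec_bound (L' : ℕ) (K : ℕ → ℝ) (hK : ∀ p, 1 ≤ p → p < L' → 0 < K p)
    (eb rb : ℕ → ℝ) (he : ∀ m, 0 ≤ eb m) (hr : ∀ m, 0 ≤ rb m)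
    (hrec : ∀ m, m < L' →
      eb m ≤ rb m + (if 1 ≤ m then K m else 0) * ∑ i ∈ Finset.range m, eb i) :
    ∑ i ∈ Finset.range L', eb i ≤
      ∑ i ∈ Finset.range L', (∏ p ∈ Finset.Ico (i+1) L', (1 + K p)) * rb i := by
  suffices h : ∀ m, m ≤ L' → ∑ i ∈ Finset.range m, eb i ≤
      ∑ i ∈ Finset.range m, (∏ p ∈ Finset.Ico (i+1) m, (1 + K p)) * rb i from h L' le_rfl
  intro m
  induction m with
  | zero => simp
  | succ m ih =>
    intro hm
    have hmL : m < L' := hm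
    have ihm := ih (le_of_lt hmL)
    rw [Finset.sum_range_succ]
    rw [Finset.sum_range_succ (fun i => (∏ p ∈ Finset.Ico (i+1) (m+1), (1 + K p)) * rb i)]
    have hlast : (∏ p ∈ Finset.Ico (m+1) (m+1), (1 + K p)) = 1 := by simp
    rcases Nat.eq_zero_or_pos m with h0 | h1
    · subst h0
      have h2 := hrec 0 hmL
      norm_num at h2 ⊢
      exact h2
    · have hKm : 0 < K m := hK m h1 hmL
      have h1' : 1 ≤ m := h1
      have h2 := hrec m hmL
      rw [if_pos h1'] at h2
      have hcoef : ∀ i ∈ Finset.range m, (∏ p ∈ Finset.Ico (i+1) (m+1), (1 + K p)) * rb i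
          = (1 + K m) * ((∏ p ∈ Finset.Ico (i+1) m, (1 + K p)) * rb i) := by
        intro i hi
        rw [Finset.prod_Ico_succ_top (Nat.succ_le_of_lt (Finset.mem_range.mp hi))]
        ring
      rw [Finset.sum_congr rfl hcoef, ← Finset.mul_sum, hlast, one_mul]
      have chain : ∑ i ∈ Finset.range m, eb i + eb m ≤
          (1 + K m) * (∑ i ∈ Finset.range m, eb i) + rb m := by nlinarith [h2]
      refine le_trans chain ?_
      have hmono : (1 + K m) * (∑ i ∈ Finset.range m, eb i) ≤
          (1 + K m) * (∑ i ∈ Finset.range m, (∏ p ∈ Finset.Ico (i+1) m, (1 + K p)) * rb i) :=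
        mul_le_mul_of_nonneg_left ihm (by linarith)
      linarith

end AuxIter

section AuxTangent
open Filter Topology

variable {n L : ℕ} {N : Fin L → ℕ}

lemma dirD_psi_congr (ψ : (ℓ : Fin L) → ZSp n L N → EuclideanSpace ℝ (Fin (N ℓ)))
    (hdep : DepBelow ψ)
    (hψdd : ∀ ℓ, ∀ z' d' : ZSp n L N, ∃ y, HasDirDeriv (ψ ℓ) z' d' y)
    (z : ZSp n L N) (ℓ : Fin L) {a b : ZSp n L N} (hth : thOf a = thOf b)
    (hlow : ∀ j : Fin L, j < ℓ → uBlk a j = uBlk b j) :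
    dirD (ψ ℓ) z a = dirD (ψ ℓ) z b := by
  obtain ⟨y, hy⟩ := hψdd ℓ z a
  have hb : HasDirDeriv (ψ ℓ) z b y := by
    refine hy.congr_dir (fun t => ?_)
    refine hdep ℓ (z + t • b) (z + t • a) ?_ ?_
    · rw [thOf_add, thOf_add, thOf_smul, thOf_smul, hth]
    · intro j hj
      rw [uBlk_add, uBlk_add, uBlk_smul, uBlk_smul, hlow j hj]
  rw [hy.dirD_eq, hb.dirD_eq]

/-- the iteration map producing the feasible point with parameter block `θ`. -/
def Gmap (ψ : (ℓ : Fin L) → ZSp n L N → EuclideanSpace ℝ (Fin (N ℓ)))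
    (θ : TSp n) : USp L N → USp L N := fun v => WithLp.toLp 2 (fun j => ψ j.1 (mkZ θ v) j.2)

/-- the feasible point with parameter block `θ z + t θ d` built from `z`. -/
def Zpt (ψ : (ℓ : Fin L) → ZSp n L N → EuclideanSpace ℝ (Fin (N ℓ)))
    (z d : ZSp n L N) (t : ℝ) : ZSp n L N :=
  mkZ (thOf z + t • thOf d) ((Gmap ψ (thOf z + t • thOf d))^[L] (uOf z))

lemma blkU_Gmap (ψ : (ℓ : Fin L) → ZSp n L N → EuclideanSpace ℝ (Fin (N ℓ)))
    (θ : TSp n) (v : USp L N) (ℓ : Fin L) :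
    blkU (Gmap ψ θ v) ℓ = ψ ℓ (mkZ θ v) := rfl

lemma Gmap_dep (ψ : (ℓ : Fin L) → ZSp n L N → EuclideanSpace ℝ (Fin (N ℓ)))
    (hdep : DepBelow ψ) (θ : TSp n) (ℓ : Fin L) (v w : USp L N)
    (hvw : ∀ j : Fin L, j < ℓ → blkU v j = blkU w j) :
    blkU (Gmap ψ θ v) ℓ = blkU (Gmap ψ θ w) ℓ := by
  rw [blkU_Gmap, blkU_Gmap]
  exact hdep ℓ _ _ rfl (fun j hj => hvw j hj)

lemma Zpt_feas (ψ : (ℓ : Fin L) → ZSp n L N → EuclideanSpace ℝ (Fin (N ℓ)))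
    (hdep : DepBelow ψ) (z d : ZSp n L N) (t : ℝ) : Zpt ψ z d t ∈ Feas ψ := by
  intro ℓ
  have hfixV := iterate_fixed (G := Gmap ψ (thOf z + t • thOf d))
    (fun ℓ' v w h => Gmap_dep ψ hdep _ ℓ' v w h) (uOf z)
  calc uBlk (Zpt ψ z d t) ℓ
      = blkU (Gmap ψ (thOf z + t • thOf d)
          ((Gmap ψ (thOf z + t • thOf d))^[L] (uOf z))) ℓ := by rw [hfixV]; rfl
    _ = ψ ℓ (Zpt ψ z d t) := rfl

lemma fixed_mem_tangentCone
    (ψ : (ℓ : Fin L) → ZSp n L N → EuclideanSpace ℝ (Fin (N ℓ))) (hdep : DepBelow ψ)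
    (hψLip : ∀ ℓ, LocallyLipschitz (ψ ℓ))
    (hψdd : ∀ ℓ, ∀ z' d' : ZSp n L N, ∃ y, HasDirDeriv (ψ ℓ) z' d' y)
    {z : ZSp n L N} (hzF : z ∈ Feas ψ) (d : ZSp n L N)
    (hfix : ∀ ℓ, uBlk d ℓ = dirD (ψ ℓ) z d) :
    d ∈ tangentCone (Feas ψ) z := by
  set τ : ℕ → ℝ := fun k => ((k : ℝ) + 1)⁻¹ with hτdef
  have hτpos : ∀ k, 0 < τ k := fun k => by positivity
  have hτ0 : Tendsto τ atTop (𝓝 0) := by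
    have := tendsto_one_div_add_atTop_nhds_zero_nat (𝕜 := ℝ)
    simpa [hτdef, one_div] using this
  have hfeas : ∀ k, Zpt ψ z d (τ k) ∈ Feas ψ := fun k => Zpt_feas ψ hdep z d (τ k)
  -- blockwise convergence of the difference quotients
  have main : ∀ m : ℕ, ∀ ℓ : Fin L, (ℓ : ℕ) < m →
      Tendsto (fun k => (τ k)⁻¹ • (uBlk (Zpt ψ z d (τ k)) ℓ - uBlk z ℓ)) atTop
        (𝓝 (uBlk d ℓ)) := by
    intro m
    induction m with
    | zero => intro ℓ h; omega
    | succ m ih =>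
      intro ℓ hℓ
      by_cases hcase : (ℓ : ℕ) < m
      · exact ih ℓ hcase
      have hlowm : ∀ j : Fin L, j < ℓ → (j : ℕ) < m := by
        intro j hj
        have hj' : (j : ℕ) < (ℓ : ℕ) := hj
        omega
      -- the comparison sequence
      set W : ℕ → ZSp n L N := fun k => mkZ (thOf z + τ k • thOf d)
        (WithLp.toLp 2 (fun j => if j.1 < ℓ then ((Gmap ψ (thOf z + τ k • thOf d))^[L] (uOf z)) j
          else (uOf z + τ k • uOf d) j)) with hWdef
      have hWpsi : ∀ k, ψ ℓ (Zpt ψ z d (τ k)) = ψ ℓ (W k) := by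
        intro k
        refine hdep ℓ _ _ rfl ?_
        intro j hj
        ext i
        show ((Gmap ψ (thOf z + τ k • thOf d))^[L] (uOf z)) ⟨j, i⟩ = _
        have : W k (Sum.inr ⟨j, i⟩) =
            if (⟨j, i⟩ : Σ ℓ' : Fin L, Fin (N ℓ')).1 < ℓ
            then ((Gmap ψ (thOf z + τ k • thOf d))^[L] (uOf z)) ⟨j, i⟩
            else (uOf z + τ k • uOf d) ⟨j, i⟩ := rfl
        rw [show uBlk (W k) j i = W k (Sum.inr ⟨j, i⟩) from rfl, this, if_pos hj]
      have hWconv : Tendsto (fun k => (τ k)⁻¹ • (W k - z)) atTop (𝓝 d) := by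
        rw [tendsto_euclid_iff]
        rintro (i | j)
        · have hval : ∀ k, ((τ k)⁻¹ • (W k - z)) (Sum.inl i) = d (Sum.inl i) := by
            intro k
            show (τ k)⁻¹ * ((thOf z i + τ k * thOf d i) - z (Sum.inl i)) = d (Sum.inl i)
            have hz' : z (Sum.inl i) = thOf z i := rfl
            have hd' : d (Sum.inl i) = thOf d i := rfl
            rw [hz', hd']
            rw [add_sub_cancel_left, inv_mul_cancel_left₀ (hτpos k).ne']
          rw [show (fun k => ((τ k)⁻¹ • (W k - z)) (Sum.inl i))
            = fun _ => d (Sum.inl i) from funext hval]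
          exact tendsto_const_nhds
        · by_cases hj : j.1 < ℓ
          · have hb := ih j.1 (hlowm j.1 hj)
            have hco := tendsto_euclid_iff.1 hb j.2
            have hval : ∀ k, ((τ k)⁻¹ • (W k - z)) (Sum.inr j)
                = ((τ k)⁻¹ • (uBlk (Zpt ψ z d (τ k)) j.1 - uBlk z j.1)) j.2 := by
              intro k
              show (τ k)⁻¹ * ((if j.1 < ℓ
                  then ((Gmap ψ (thOf z + τ k • thOf d))^[L] (uOf z)) j
                  else (uOf z + τ k • uOf d) j) - z (Sum.inr j))
                = (τ k)⁻¹ * (uBlk (Zpt ψ z d (τ k)) j.1 j.2 - uBlk z j.1 j.2)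
              rw [if_pos hj]
              rfl
            rw [show (fun k => ((τ k)⁻¹ • (W k - z)) (Sum.inr j))
              = fun k => ((τ k)⁻¹ • (uBlk (Zpt ψ z d (τ k)) j.1 - uBlk z j.1)) j.2
              from funext hval]
            exact hco
          · have hval : ∀ k, ((τ k)⁻¹ • (W k - z)) (Sum.inr j) = d (Sum.inr j) := by
              intro k
              show (τ k)⁻¹ * ((if j.1 < ℓ
                  then ((Gmap ψ (thOf z + τ k • thOf d))^[L] (uOf z)) j
                  else (uOf z + τ k • uOf d) j) - z (Sum.inr j))
                = d (Sum.inr j)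
              rw [if_neg hj]
              show (τ k)⁻¹ * ((z (Sum.inr j) + τ k * d (Sum.inr j)) - z (Sum.inr j))
                = d (Sum.inr j)
              rw [add_sub_cancel_left, inv_mul_cancel_left₀ (hτpos k).ne']
            rw [show (fun k => ((τ k)⁻¹ • (W k - z)) (Sum.inr j))
              = fun _ => d (Sum.inr j) from funext hval]
            exact tendsto_const_nhds
      obtain ⟨y, hy⟩ := hψdd ℓ z d
      have hyl : uBlk d ℓ = y := by rw [hfix ℓ, hy.dirD_eq]
      have hseq := bdiff_seq (hψLip ℓ) hy hτpos hτ0 hWconv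
      rw [← hyl] at hseq
      have heq : (fun k => (τ k)⁻¹ • (uBlk (Zpt ψ z d (τ k)) ℓ - uBlk z ℓ))
          = fun k => (τ k)⁻¹ • (ψ ℓ (W k) - ψ ℓ z) := by
        funext k
        rw [hfeas k ℓ, hzF ℓ, hWpsi k]
      rw [heq]
      exact hseq
  have hconv : Tendsto (fun k => (τ k)⁻¹ • (Zpt ψ z d (τ k) - z)) atTop (𝓝 d) := by
    rw [tendsto_euclid_iff]
    rintro (i | j)
    · have hval : ∀ k, ((τ k)⁻¹ • (Zpt ψ z d (τ k) - z)) (Sum.inl i) = d (Sum.inl i) := by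
        intro k
        show (τ k)⁻¹ * ((thOf z i + τ k * thOf d i) - z (Sum.inl i)) = d (Sum.inl i)
        have hz' : z (Sum.inl i) = thOf z i := rfl
        have hd' : d (Sum.inl i) = thOf d i := rfl
        rw [hz', hd']
        rw [add_sub_cancel_left, inv_mul_cancel_left₀ (hτpos k).ne']
      rw [show (fun k => ((τ k)⁻¹ • (Zpt ψ z d (τ k) - z)) (Sum.inl i))
        = fun _ => d (Sum.inl i) from funext hval]
      exact tendsto_const_nhds
    · have hb := main L j.1 j.1.2
      exact tendsto_euclid_iff.1 hb j.2
  have hZz : Tendsto (fun k => Zpt ψ z d (τ k)) atTop (𝓝 z) := by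
    have hq : Tendsto (fun k => τ k • ((τ k)⁻¹ • (Zpt ψ z d (τ k) - z))) atTop
        (𝓝 ((0:ℝ) • d)) := hτ0.smul hconv
    have heq : (fun k => τ k • ((τ k)⁻¹ • (Zpt ψ z d (τ k) - z)))
        = fun k => Zpt ψ z d (τ k) - z := by
      funext k; rw [smul_inv_smul₀ (hτpos k).ne']
    rw [heq, zero_smul] at hq
    have := hq.add_const z
    simpa using this
  exact ⟨fun k => Zpt ψ z d (τ k), τ, hfeas, hZz, hτpos, hτ0, hconv⟩

lemma tangent_fix
    (ψ : (ℓ : Fin L) → ZSp n L N → EuclideanSpace ℝ (Fin (N ℓ)))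
    (hψLip : ∀ ℓ, LocallyLipschitz (ψ ℓ))
    (hψdd : ∀ ℓ, ∀ z' d' : ZSp n L N, ∃ y, HasDirDeriv (ψ ℓ) z' d' y)
    {z : ZSp n L N} (hzF : z ∈ Feas ψ) {d : ZSp n L N}
    (hd : d ∈ tangentCone (Feas ψ) z) (ℓ : Fin L) :
    uBlk d ℓ = dirD (ψ ℓ) z d := by
  obtain ⟨zk, τ, hmem, hzk, hτpos, hτ0, hconv⟩ := hd
  obtain ⟨y, hy⟩ := hψdd ℓ z d
  have h1 : Tendsto (fun k => (τ k)⁻¹ • (ψ ℓ (zk k) - ψ ℓ z)) atTop (𝓝 y) :=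
    bdiff_seq (hψLip ℓ) hy hτpos hτ0 hconv
  have h2 : Tendsto (fun k => (τ k)⁻¹ • (uBlk (zk k) ℓ - uBlk z ℓ)) atTop
      (𝓝 (uBlk d ℓ)) := by
    rw [tendsto_euclid_iff]
    intro i
    exact tendsto_euclid_iff.1 hconv (Sum.inr ⟨ℓ, i⟩)
  have heq : (fun k => (τ k)⁻¹ • (uBlk (zk k) ℓ - uBlk z ℓ))
      = fun k => (τ k)⁻¹ • (ψ ℓ (zk k) - ψ ℓ z) := by
    funext k
    rw [hmem k ℓ, hzF ℓ]
  rw [heq] at h2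
  rw [hy.dirD_eq]
  exact tendsto_nhds_unique h2 h1

end AuxTangent

section AuxDeriv
open Filter Topology RealInnerProductSpace

variable {n L : ℕ} {N : Fin L → ℕ}

lemma hasDirDeriv_Fobj (g : USp L N → ℝ) (lam : ℝ)
    (hgdd : ∀ u du : USp L N, ∃ y, HasDirDeriv g u du y) (z d : ZSp n L N) :
    HasDirDeriv (Fobj g lam) z d
      (dirD g (uOf z) (uOf d) + lam * (2 * ⟪thOf z, thOf d⟫)) := by
  obtain ⟨y, hy⟩ := hgdd (uOf z) (uOf d)
  rw [hy.dirD_eq]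
  have hkey : ∀ t : ℝ, 0 < t →
      t⁻¹ • (Fobj g lam (z + t • d) - Fobj g lam z)
      = t⁻¹ • (g (uOf z + t • uOf d) - g (uOf z))
        + (lam * (2 * ⟪thOf z, thOf d⟫) + t * (lam * ‖thOf d‖ ^ 2)) := by
    intro t ht
    unfold Fobj
    rw [uOf_add, uOf_smul, thOf_add, thOf_smul]
    rw [norm_add_sq_real, real_inner_smul_right, norm_smul]
    simp only [smul_eq_mul, Real.norm_eq_abs]
    rw [mul_pow, sq_abs]
    field_simp
    ring
  have hq : Tendsto (fun t : ℝ => t⁻¹ • (g (uOf z + t • uOf d) - g (uOf z))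
      + (lam * (2 * ⟪thOf z, thOf d⟫) + t * (lam * ‖thOf d‖ ^ 2))) (𝓝[>] 0)
      (𝓝 (y + lam * (2 * ⟪thOf z, thOf d⟫))) := by
    have h2 : Tendsto (fun t : ℝ => lam * (2 * ⟪thOf z, thOf d⟫)
        + t * (lam * ‖thOf d‖ ^ 2)) (𝓝[>] (0:ℝ)) (𝓝 (lam * (2 * ⟪thOf z, thOf d⟫))) := by
      have h3 : Tendsto (fun t : ℝ => t * (lam * ‖thOf d‖ ^ 2)) (𝓝[>] (0:ℝ)) (𝓝 0) := by
        have := (tendsto_id.mono_left (nhdsWithin_le_nhds :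
          (𝓝[>] (0:ℝ)) ≤ 𝓝 0)).mul_const (lam * ‖thOf d‖ ^ 2)
        simpa using this
      have h4 := h3.const_add (lam * (2 * ⟪thOf z, thOf d⟫))
      simpa using h4
    have := hy.add h2
    simpa using this
  refine hq.congr' ?_
  filter_upwards [self_mem_nhdsWithin] with t ht
  exact (hkey t ht).symm

lemma hasDirDeriv_Th (g : USp L N → ℝ) (lam : ℝ)
    (ψ : (ℓ : Fin L) → ZSp n L N → EuclideanSpace ℝ (Fin (N ℓ))) (β : Fin L → ℝ)
    (hgdd : ∀ u du : USp L N, ∃ y, HasDirDeriv g u du y)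
    (hψdd : ∀ ℓ, ∀ z' d' : ZSp n L N, ∃ y, HasDirDeriv (ψ ℓ) z' d' y)
    {z : ZSp n L N} (hzF : z ∈ Feas ψ) (d : ZSp n L N) :
    HasDirDeriv (Th g lam ψ β) z d
      (dirD g (uOf z) (uOf d) + lam * (2 * ⟪thOf z, thOf d⟫)
        + ∑ ℓ, β ℓ * ∑ i, |uBlk d ℓ i - dirD (ψ ℓ) z d i|) := by
  have hkey : ∀ t : ℝ, 0 < t →
      t⁻¹ • (Th g lam ψ β (z + t • d) - Th g lam ψ β z)
      = t⁻¹ • (Fobj g lam (z + t • d) - Fobj g lam z)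
        + ∑ ℓ, β ℓ * ∑ i, |uBlk d ℓ i - t⁻¹ * (ψ ℓ (z + t • d) i - ψ ℓ z i)| := by
    intro t ht
    unfold Th
    have hterm : ∀ (ℓ : Fin L) (i : Fin (N ℓ)),
        |uBlk (z + t • d) ℓ i - ψ ℓ (z + t • d) i|
        = t * |uBlk d ℓ i - t⁻¹ * (ψ ℓ (z + t • d) i - ψ ℓ z i)| := by
      intro ℓ i
      have h1 : uBlk (z + t • d) ℓ i = ψ ℓ z i + t * uBlk d ℓ i := by
        rw [uBlk_add, uBlk_smul]
        show uBlk z ℓ i + t * uBlk d ℓ i = _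
        rw [hzF ℓ]
      have hQ : uBlk (z + t • d) ℓ i - ψ ℓ (z + t • d) i
          = t * (uBlk d ℓ i - t⁻¹ * (ψ ℓ (z + t • d) i - ψ ℓ z i)) := by
        rw [h1]
        field_simp
        ring
      rw [hQ, abs_mul, abs_of_pos ht]
    have hzero : ∀ (ℓ : Fin L) (i : Fin (N ℓ)), |uBlk z ℓ i - ψ ℓ z i| = 0 := by
      intro ℓ i
      rw [hzF ℓ]
      simp
    simp only [hterm, hzero, Finset.sum_const_zero, mul_zero, add_zero]
    have hpull : (∑ ℓ, β ℓ * ∑ i, t * |uBlk d ℓ i - t⁻¹ * (ψ ℓ (z + t • d) i - ψ ℓ z i)|)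
        = t * ∑ ℓ, β ℓ * ∑ i, |uBlk d ℓ i - t⁻¹ * (ψ ℓ (z + t • d) i - ψ ℓ z i)| := by
      rw [Finset.mul_sum]
      refine Finset.sum_congr rfl fun ℓ _ => ?_
      rw [← Finset.mul_sum]
      ring
    rw [hpull]
    simp only [smul_eq_mul]
    field_simp
    ring
  have hF := hasDirDeriv_Fobj g lam hgdd z d
  have hpen : ∀ (ℓ : Fin L) (i : Fin (N ℓ)),
      Tendsto (fun t : ℝ => |uBlk d ℓ i - t⁻¹ * (ψ ℓ (z + t • d) i - ψ ℓ z i)|)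
        (𝓝[>] 0) (𝓝 |uBlk d ℓ i - dirD (ψ ℓ) z d i|) := by
    intro ℓ i
    obtain ⟨y, hy⟩ := hψdd ℓ z d
    rw [hy.dirD_eq]
    have hco := tendsto_euclid_iff.1 hy i
    exact (tendsto_const_nhds.sub hco).abs
  have hsum : Tendsto (fun t : ℝ =>
      ∑ ℓ, β ℓ * ∑ i, |uBlk d ℓ i - t⁻¹ * (ψ ℓ (z + t • d) i - ψ ℓ z i)|) (𝓝[>] 0)
      (𝓝 (∑ ℓ, β ℓ * ∑ i, |uBlk d ℓ i - dirD (ψ ℓ) z d i|)) := by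
    refine tendsto_finset_sum _ fun ℓ _ => ?_
    exact ((tendsto_finset_sum _ fun i _ => hpen ℓ i).const_mul (β ℓ))
  have := hF.add hsum
  refine this.congr' ?_
  filter_upwards [self_mem_nhdsWithin] with t ht
  exact (hkey t ht).symm

/-- the derivative analogue of `Gmap`. -/
def Dmap (ψ : (ℓ : Fin L) → ZSp n L N → EuclideanSpace ℝ (Fin (N ℓ)))
    (z : ZSp n L N) (θ : TSp n) : USp L N → USp L N :=
  fun v => WithLp.toLp 2 (fun j => dirD (ψ j.1) z (mkZ θ v) j.2)

/-- the "projection" of a direction `d` onto the linearized feasible directions. -/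
def Dhat (ψ : (ℓ : Fin L) → ZSp n L N → EuclideanSpace ℝ (Fin (N ℓ)))
    (z d : ZSp n L N) : ZSp n L N :=
  mkZ (thOf d) ((Dmap ψ z (thOf d))^[L] (uOf d))

lemma thOf_Dhat (ψ : (ℓ : Fin L) → ZSp n L N → EuclideanSpace ℝ (Fin (N ℓ)))
    (z d : ZSp n L N) : thOf (Dhat ψ z d) = thOf d := rfl

lemma Dhat_fix (ψ : (ℓ : Fin L) → ZSp n L N → EuclideanSpace ℝ (Fin (N ℓ)))
    (hdep : DepBelow ψ)
    (hψdd : ∀ ℓ, ∀ z' d' : ZSp n L N, ∃ y, HasDirDeriv (ψ ℓ) z' d' y)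
    (z d : ZSp n L N) (ℓ : Fin L) :
    uBlk (Dhat ψ z d) ℓ = dirD (ψ ℓ) z (Dhat ψ z d) := by
  have hDdep : ∀ (ℓ' : Fin L) (v w : USp L N),
      (∀ j : Fin L, j < ℓ' → blkU v j = blkU w j) →
      blkU (Dmap ψ z (thOf d) v) ℓ' = blkU (Dmap ψ z (thOf d) w) ℓ' := by
    intro ℓ' v w hvw
    show WithLp.toLp 2 (fun i => dirD (ψ ℓ') z (mkZ (thOf d) v) i)
      = WithLp.toLp 2 (fun i => dirD (ψ ℓ') z (mkZ (thOf d) w) i)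
    have := dirD_psi_congr ψ hdep hψdd z ℓ' (a := mkZ (thOf d) v) (b := mkZ (thOf d) w)
      rfl (fun j hj => hvw j hj)
    rw [this]
  have hfixV := iterate_fixed (G := Dmap ψ z (thOf d)) hDdep (uOf d)
  calc uBlk (Dhat ψ z d) ℓ
      = blkU (Dmap ψ z (thOf d) ((Dmap ψ z (thOf d))^[L] (uOf d))) ℓ := by rw [hfixV]; rfl
    _ = dirD (ψ ℓ) z (Dhat ψ z d) := rfl

end AuxDeriv

section AuxNorm2
open Filter Topology

variable {n L : ℕ} {N : Fin L → ℕ}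

lemma sum_Iio_fin (f : Fin L → ℝ) (ℓ : Fin L) :
    ∑ j ∈ Finset.Iio ℓ, f j
      = ∑ i ∈ Finset.range (ℓ : ℕ), (if h : i < L then f ⟨i, h⟩ else 0) := by
  refine Finset.sum_nbij' (i := fun (j : Fin L) => (j : ℕ))
    (j := fun i => if h : i < L then (⟨i, h⟩ : Fin L) else ℓ) ?_ ?_ ?_ ?_ ?_
  · intro a ha
    rw [Finset.mem_range]
    exact Fin.lt_def.mp (Finset.mem_Iio.mp ha)
  · intro i hi
    have hiℓ : i < (ℓ : ℕ) := Finset.mem_range.mp hi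
    have hiL : i < L := by omega
    show (if h : i < L then (⟨i, h⟩ : Fin L) else ℓ) ∈ Finset.Iio ℓ
    rw [dif_pos hiL, Finset.mem_Iio]
    exact Fin.lt_def.mpr hiℓ
  · intro a ha
    simp [a.2]
  · intro i hi
    have hiL : i < L := by have := Finset.mem_range.mp hi; omega
    simp [hiL]
  · intro a ha
    rw [dif_pos a.2]

lemma norm_uOf_sub_le (x y : ZSp n L N) :
    ‖uOf x - uOf y‖ ≤ ∑ ℓ : Fin L, ‖uBlk x ℓ - uBlk y ℓ‖ := by
  have h := norm_le_sum_blkU (uOf x - uOf y) Finset.univ (fun j _ => Finset.mem_univ _)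
  refine h.trans (le_of_eq (Finset.sum_congr rfl fun ℓ _ => ?_))
  rfl

lemma norm_uLow_sub_le (a b : ZSp n L N) (ℓ : Fin L) :
    ‖uLow a ℓ - uLow b ℓ‖ ≤ ∑ j ∈ Finset.Iio ℓ, ‖uBlk a j - uBlk b j‖ := by
  have h := norm_le_sum_blkU (uLow a ℓ - uLow b ℓ) (Finset.Iio ℓ) ?_
  · refine h.trans (le_of_eq (Finset.sum_congr rfl fun j hj => ?_))
    have hjℓ : j < ℓ := Finset.mem_Iio.mp hj
    congr 1
    ext i
    show (if (⟨j, i⟩ : Σ ℓ' : Fin L, Fin (N ℓ')).1 < ℓ then a (Sum.inr ⟨j, i⟩) else 0)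
      - (if (⟨j, i⟩ : Σ ℓ' : Fin L, Fin (N ℓ')).1 < ℓ then b (Sum.inr ⟨j, i⟩) else 0)
      = uBlk a j i - uBlk b j i
    rw [if_pos hjℓ, if_pos hjℓ]
    rfl
  · intro j hne
    rw [Finset.mem_Iio]
    by_contra hj
    apply hne
    show (if j.1 < ℓ then a (Sum.inr j) else 0) - (if j.1 < ℓ then b (Sum.inr j) else 0) = 0
    rw [if_neg hj, if_neg hj, sub_zero]

end AuxNorm2

/-- Remark 3.2 (eq. (3.14)): for a d-stationary point `z` of (P0) with `Θ(z) ≤ γ̄`,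
`Θ′(z;d) > 0` off the tangent cone, and `{d : Θ′(z;d) = 0} = {d ∈ T_{F₀}(z) : F′(z;d) = 0}`. -/
theorem stmt13
    {n L : ℕ} (hn : 0 < n) (hL : 0 < L) {N : Fin L → ℕ} (hN : ∀ ℓ, 0 < N ℓ)
    (lam : ℝ) (hlam : 0 < lam) (β : Fin L → ℝ) (hβ : ∀ ℓ, 0 < β ℓ)
    (g : USp L N → ℝ) (hg0 : ∀ u, 0 ≤ g u)
    (ψ : (ℓ : Fin L) → ZSp n L N → EuclideanSpace ℝ (Fin (N ℓ)))
    (hdep : DepBelow ψ)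
    -- Assumption A1
    (hgLip : LocallyLipschitz g) (hψLip : ∀ ℓ, LocallyLipschitz (ψ ℓ))
    (hgdd : ∀ u du : USp L N, ∃ y, HasDirDeriv g u du y)
    (hψdd : ∀ ℓ, ∀ z d : ZSp n L N, ∃ y, HasDirDeriv (ψ ℓ) z d y)
    -- the reference feasible point `z⁰` (with `θ`-block `0`), giving `γ̄ = Θ(z⁰)`
    (z0 : ZSp n L N) (hz0F : z0 ∈ Feas ψ) (hz0th : thOf z0 = 0)
    -- Lipschitz moduli on the enlarged level set `{Θ ≤ γ̄} + εB`
    (Kg : ℝ) (hKg : 0 < Kg) (K : ℕ → ℝ) (hKpos : ∀ p, 1 ≤ p → p < L → 0 < K p)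
    (ε : ℝ) (hε : 0 < ε)
    (hLipg : ∀ w w' : ZSp n L N, w ∈ LevE g lam ψ β (Th g lam ψ β z0) ε →
      w' ∈ LevE g lam ψ β (Th g lam ψ β z0) ε → thOf w = thOf w' →
      |g (uOf w) - g (uOf w')| ≤ Kg * ‖uOf w - uOf w'‖)
    (hLipψ : ∀ ℓ : Fin L, 1 ≤ (ℓ : ℕ) → ∀ w w' : ZSp n L N,
      w ∈ LevE g lam ψ β (Th g lam ψ β z0) ε →
      w' ∈ LevE g lam ψ β (Th g lam ψ β z0) ε → thOf w = thOf w' →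
      ‖ψ ℓ w - ψ ℓ w'‖ ≤ K (ℓ : ℕ) * ‖uLow w ℓ - uLow w' ℓ‖)
    -- threshold condition (T) on the penalty parameters
    (hT : ∀ ℓ : Fin L, Kg * ∏ p ∈ Finset.Ico ((ℓ : ℕ) + 1) L, (1 + K p) < β ℓ)
    :
    ∀ z : ZSp n L N, z ∈ Feas ψ →
      (∀ d ∈ tangentCone (Feas ψ) z, 0 ≤ dirD (Fobj g lam) z d) →
      Th g lam ψ β z ≤ Th g lam ψ β z0 →
      (∀ d ∉ tangentCone (Feas ψ) z, 0 < dirD (Th g lam ψ β) z d) ∧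
      {d : ZSp n L N | dirD (Th g lam ψ β) z d = 0} =
        {d : ZSp n L N | d ∈ tangentCone (Feas ψ) z ∧ dirD (Fobj g lam) z d = 0} := by
  intro z hzF hstat hlev
  classical
  have hpert : ∀ w : ZSp n L N, ‖w - z‖ ≤ ε → w ∈ LevE g lam ψ β (Th g lam ψ β z0) ε :=
    fun w h => ⟨z, hlev, h⟩
  have hFdirD : ∀ dd : ZSp n L N, dirD (Fobj g lam) z dd
      = dirD g (uOf z) (uOf dd) + lam * (2 * (inner ℝ (thOf z) (thOf dd) : ℝ)) :=
    fun dd => (hasDirDeriv_Fobj g lam hgdd z dd).dirD_eq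
  have hThdirD : ∀ dd : ZSp n L N, dirD (Th g lam ψ β) z dd
      = dirD g (uOf z) (uOf dd) + lam * (2 * (inner ℝ (thOf z) (thOf dd) : ℝ))
        + ∑ ℓ, β ℓ * ∑ i, |uBlk dd ℓ i - dirD (ψ ℓ) z dd i| :=
    fun dd => (hasDirDeriv_Th g lam ψ β hgdd hψdd hzF dd).dirD_eq
  have hsmall : ∀ c : ℝ, ∀ᶠ t in 𝓝[>] (0:ℝ), t * c < ε := by
    intro c
    have h1 : Tendsto (fun t : ℝ => t * c) (𝓝[>] (0:ℝ)) (𝓝 0) := by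
      have := (tendsto_id.mono_left (nhdsWithin_le_nhds : (𝓝[>] (0:ℝ)) ≤ 𝓝 0)).mul_const c
      simpa using this
    exact h1.eventually_lt_const hε
  -- Lipschitz transfer for the directional derivative of g
  have hgdLip : ∀ a b : USp L N,
      |dirD g (uOf z) a - dirD g (uOf z) b| ≤ Kg * ‖a - b‖ := by
    intro a b
    obtain ⟨ya, hya⟩ := hgdd (uOf z) a
    obtain ⟨yb, hyb⟩ := hgdd (uOf z) b
    rw [hya.dirD_eq, hyb.dirD_eq]
    have htt : Tendsto (fun t : ℝ => |t⁻¹ • (g (uOf z + t • a) - g (uOf z))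
        - t⁻¹ • (g (uOf z + t • b) - g (uOf z))|) (𝓝[>] 0) (𝓝 |ya - yb|) := (hya.sub hyb).abs
    refine le_of_tendsto htt ?_
    filter_upwards [hsmall ‖a‖, hsmall ‖b‖, self_mem_nhdsWithin] with t hta htb htpos
    have ht0 : (0:ℝ) < t := htpos
    have hwa : z + t • mkZ (0 : TSp n) a ∈ LevE g lam ψ β (Th g lam ψ β z0) ε := by
      apply hpert
      rw [add_sub_cancel_left, norm_smul, norm_mkZ_zero, Real.norm_eq_abs, abs_of_pos ht0]
      exact le_of_lt hta
    have hwb : z + t • mkZ (0 : TSp n) b ∈ LevE g lam ψ β (Th g lam ψ β z0) ε := by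
      apply hpert
      rw [add_sub_cancel_left, norm_smul, norm_mkZ_zero, Real.norm_eq_abs, abs_of_pos ht0]
      exact le_of_lt htb
    have hth : thOf (z + t • mkZ (0 : TSp n) a) = thOf (z + t • mkZ (0 : TSp n) b) := by
      rw [thOf_add, thOf_smul, thOf_mkZ, thOf_add, thOf_smul, thOf_mkZ]
    have hb1 := hLipg _ _ hwa hwb hth
    rw [uOf_add, uOf_smul, uOf_mkZ, uOf_add, uOf_smul, uOf_mkZ] at hb1
    have hnorm : (uOf z + t • a) - (uOf z + t • b) = t • (a - b) := by
      rw [smul_sub]; abel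
    rw [hnorm, norm_smul, Real.norm_eq_abs, abs_of_pos ht0] at hb1
    have hLHS : |t⁻¹ • (g (uOf z + t • a) - g (uOf z)) - t⁻¹ • (g (uOf z + t • b) - g (uOf z))|
        = t⁻¹ * |g (uOf z + t • a) - g (uOf z + t • b)| := by
      simp only [smul_eq_mul]
      rw [← mul_sub, abs_mul, abs_inv, abs_of_pos ht0, sub_sub_sub_cancel_right]
    rw [hLHS]
    calc t⁻¹ * |g (uOf z + t • a) - g (uOf z + t • b)|
        ≤ t⁻¹ * (Kg * (t * ‖a - b‖)) := mul_le_mul_of_nonneg_left hb1 (by positivity)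
      _ = Kg * ‖a - b‖ := by field_simp
  -- Lipschitz transfer for directional derivatives of ψ
  have hψdLip : ∀ ℓ : Fin L, 1 ≤ (ℓ : ℕ) → ∀ a b : ZSp n L N, thOf a = thOf b →
      ‖dirD (ψ ℓ) z a - dirD (ψ ℓ) z b‖ ≤ K (ℓ : ℕ) * ‖uLow a ℓ - uLow b ℓ‖ := by
    intro ℓ hℓ1 a b hthab
    obtain ⟨ya, hya⟩ := hψdd ℓ z a
    obtain ⟨yb, hyb⟩ := hψdd ℓ z b
    rw [hya.dirD_eq, hyb.dirD_eq]
    have htt : Tendsto (fun t : ℝ => ‖t⁻¹ • (ψ ℓ (z + t • a) - ψ ℓ z)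
        - t⁻¹ • (ψ ℓ (z + t • b) - ψ ℓ z)‖) (𝓝[>] 0) (𝓝 ‖ya - yb‖) := (hya.sub hyb).norm
    refine le_of_tendsto htt ?_
    filter_upwards [hsmall ‖a‖, hsmall ‖b‖, self_mem_nhdsWithin] with t hta htb htpos
    have ht0 : (0:ℝ) < t := htpos
    have hwa : z + t • a ∈ LevE g lam ψ β (Th g lam ψ β z0) ε := by
      apply hpert
      rw [add_sub_cancel_left, norm_smul, Real.norm_eq_abs, abs_of_pos ht0]
      exact le_of_lt hta
    have hwb : z + t • b ∈ LevE g lam ψ β (Th g lam ψ β z0) ε := by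
      apply hpert
      rw [add_sub_cancel_left, norm_smul, Real.norm_eq_abs, abs_of_pos ht0]
      exact le_of_lt htb
    have hth2 : thOf (z + t • a) = thOf (z + t • b) := by
      rw [thOf_add, thOf_smul, thOf_add, thOf_smul, hthab]
    have hb1 := hLipψ ℓ hℓ1 _ _ hwa hwb hth2
    have hul : uLow (z + t • a) ℓ - uLow (z + t • b) ℓ = t • (uLow a ℓ - uLow b ℓ) := by
      rw [uLow_add, uLow_smul, uLow_add, uLow_smul, smul_sub]; abel
    rw [hul, norm_smul, Real.norm_eq_abs, abs_of_pos ht0] at hb1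
    have hLHS : ‖t⁻¹ • (ψ ℓ (z + t • a) - ψ ℓ z) - t⁻¹ • (ψ ℓ (z + t • b) - ψ ℓ z)‖
        = t⁻¹ * ‖ψ ℓ (z + t • a) - ψ ℓ (z + t • b)‖ := by
      rw [← smul_sub, sub_sub_sub_cancel_right, norm_smul, Real.norm_eq_abs, abs_inv,
        abs_of_pos ht0]
    rw [hLHS]
    calc t⁻¹ * ‖ψ ℓ (z + t • a) - ψ ℓ (z + t • b)‖
        ≤ t⁻¹ * (K (ℓ:ℕ) * (t * ‖uLow a ℓ - uLow b ℓ‖)) :=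
          mul_le_mul_of_nonneg_left hb1 (by positivity)
      _ = K (ℓ:ℕ) * ‖uLow a ℓ - uLow b ℓ‖ := by field_simp
  -- first conclusion
  have claim1 : ∀ dd : ZSp n L N, dd ∉ tangentCone (Feas ψ) z →
      0 < dirD (Th g lam ψ β) z dd := by
    intro dd hdT
    have hdhfix : ∀ ℓ, uBlk (Dhat ψ z dd) ℓ = dirD (ψ ℓ) z (Dhat ψ z dd) :=
      fun ℓ => Dhat_fix ψ hdep hψdd z dd ℓ
    have hdhT : Dhat ψ z dd ∈ tangentCone (Feas ψ) z :=
      fixed_mem_tangentCone ψ hdep hψLip hψdd hzF _ hdhfix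
    have hFdh : 0 ≤ dirD (Fobj g lam) z (Dhat ψ z dd) := hstat _ hdhT
    have hrec : ∀ m, m < L →
        (if h : m < L then ‖uBlk dd ⟨m,h⟩ - uBlk (Dhat ψ z dd) ⟨m,h⟩‖ else 0)
        ≤ (if h : m < L then ‖uBlk dd ⟨m,h⟩ - dirD (ψ ⟨m,h⟩) z dd‖ else 0)
          + (if 1 ≤ m then K m else 0) * ∑ i ∈ Finset.range m,
            (if h : i < L then ‖uBlk dd ⟨i,h⟩ - uBlk (Dhat ψ z dd) ⟨i,h⟩‖ else 0) := by
      intro m hm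
      rw [dif_pos hm, dif_pos hm]
      have hsplit : ‖uBlk dd ⟨m,hm⟩ - uBlk (Dhat ψ z dd) ⟨m,hm⟩‖
          ≤ ‖uBlk dd ⟨m,hm⟩ - dirD (ψ ⟨m,hm⟩) z dd‖
            + ‖dirD (ψ ⟨m,hm⟩) z dd - dirD (ψ ⟨m,hm⟩) z (Dhat ψ z dd)‖ := by
        have hident : uBlk dd ⟨m,hm⟩ - uBlk (Dhat ψ z dd) ⟨m,hm⟩
            = (uBlk dd ⟨m,hm⟩ - dirD (ψ ⟨m,hm⟩) z dd)
              + (dirD (ψ ⟨m,hm⟩) z dd - dirD (ψ ⟨m,hm⟩) z (Dhat ψ z dd)) := by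
          rw [hdhfix ⟨m,hm⟩]; abel
        rw [hident]
        exact norm_add_le _ _
      by_cases h1m : 1 ≤ m
      · rw [if_pos h1m]
        have hKm : 0 < K m := hKpos m h1m hm
        have hKb := hψdLip ⟨m,hm⟩ h1m dd (Dhat ψ z dd) ((thOf_Dhat ψ z dd).symm)
        have hlow := norm_uLow_sub_le dd (Dhat ψ z dd) ⟨m,hm⟩
        have hsum : ∑ j ∈ Finset.Iio (⟨m,hm⟩ : Fin L), ‖uBlk dd j - uBlk (Dhat ψ z dd) j‖
            = ∑ i ∈ Finset.range m,
              (if h : i < L then ‖uBlk dd ⟨i,h⟩ - uBlk (Dhat ψ z dd) ⟨i,h⟩‖ else 0) :=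
          sum_Iio_fin _ ⟨m,hm⟩
        have h2 : ‖dirD (ψ ⟨m,hm⟩) z dd - dirD (ψ ⟨m,hm⟩) z (Dhat ψ z dd)‖
            ≤ K m * ∑ i ∈ Finset.range m,
              (if h : i < L then ‖uBlk dd ⟨i,h⟩ - uBlk (Dhat ψ z dd) ⟨i,h⟩‖ else 0) := by
          refine hKb.trans ?_
          rw [← hsum]
          exact mul_le_mul_of_nonneg_left (norm_uLow_sub_le dd (Dhat ψ z dd) ⟨m,hm⟩)
            (le_of_lt hKm)
        linarith [hsplit, h2]
      · rw [if_neg h1m]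
        have hm0 : m = 0 := by omega
        have hdd0 : dirD (ψ ⟨m,hm⟩) z dd = dirD (ψ ⟨m,hm⟩) z (Dhat ψ z dd) := by
          refine dirD_psi_congr ψ hdep hψdd z ⟨m,hm⟩ ((thOf_Dhat ψ z dd).symm) ?_
          intro j hj
          exfalso
          have h3 : (j : ℕ) < ((⟨m, hm⟩ : Fin L) : ℕ) := Fin.lt_def.mp hj
          have h4 : ((⟨m, hm⟩ : Fin L) : ℕ) = m := rfl
          omega
        have hzero : ‖dirD (ψ ⟨m,hm⟩) z dd - dirD (ψ ⟨m,hm⟩) z (Dhat ψ z dd)‖ = 0 := by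
          rw [hdd0, sub_self, norm_zero]
        rw [zero_mul, add_zero]
        linarith [hsplit, hzero.le, hzero.ge]
    have hrecb := rec_bound L K hKpos
      (fun m => if h : m < L then ‖uBlk dd ⟨m,h⟩ - uBlk (Dhat ψ z dd) ⟨m,h⟩‖ else 0)
      (fun m => if h : m < L then ‖uBlk dd ⟨m,h⟩ - dirD (ψ ⟨m,h⟩) z dd‖ else 0)
      (fun m => by split
                   · exact norm_nonneg _
                   · exact le_refl 0)
      (fun m => by split
                   · exact norm_nonneg _
                   · exact le_refl 0)
      hrec
    have hconv_e : ∑ i ∈ Finset.range L,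
        (fun m => if h : m < L then ‖uBlk dd ⟨m,h⟩ - uBlk (Dhat ψ z dd) ⟨m,h⟩‖ else 0) i
        = ∑ ℓ : Fin L, ‖uBlk dd ℓ - uBlk (Dhat ψ z dd) ℓ‖ := by
      rw [← Fin.sum_univ_eq_sum_range]
      exact Finset.sum_congr rfl fun i _ => by simp
    have hconv_r : ∑ i ∈ Finset.range L, (∏ p ∈ Finset.Ico (i+1) L, (1+K p)) *
        (fun m => if h : m < L then ‖uBlk dd ⟨m,h⟩ - dirD (ψ ⟨m,h⟩) z dd‖ else 0) i
        = ∑ ℓ : Fin L, (∏ p ∈ Finset.Ico ((ℓ:ℕ)+1) L, (1+K p))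
            * ‖uBlk dd ℓ - dirD (ψ ℓ) z dd‖ := by
      rw [← Fin.sum_univ_eq_sum_range
        (fun i => (∏ p ∈ Finset.Ico (i+1) L, (1+K p)) *
          (if h : i < L then ‖uBlk dd ⟨i,h⟩ - dirD (ψ ⟨i,h⟩) z dd‖ else 0))]
      exact Finset.sum_congr rfl fun i _ => by simp
    have hE : ∑ ℓ : Fin L, ‖uBlk dd ℓ - uBlk (Dhat ψ z dd) ℓ‖
        ≤ ∑ ℓ : Fin L, (∏ p ∈ Finset.Ico ((ℓ:ℕ)+1) L, (1+K p))
            * ‖uBlk dd ℓ - dirD (ψ ℓ) z dd‖ := by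
      rw [← hconv_e, ← hconv_r]
      exact hrecb
    have hex : ∃ ℓ, uBlk dd ℓ ≠ dirD (ψ ℓ) z dd := by
      by_contra hcon
      push_neg at hcon
      exact hdT (fixed_mem_tangentCone ψ hdep hψLip hψdd hzF dd hcon)
    obtain ⟨ℓ0, hℓ0⟩ := hex
    have hr0 : 0 < ‖uBlk dd ℓ0 - dirD (ψ ℓ0) z dd‖ := by
      rw [norm_pos_iff]
      exact sub_ne_zero.mpr hℓ0
    have hPen : ∑ ℓ : Fin L, β ℓ * ‖uBlk dd ℓ - dirD (ψ ℓ) z dd‖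
        ≤ ∑ ℓ : Fin L, β ℓ * ∑ i, |uBlk dd ℓ i - dirD (ψ ℓ) z dd i| := by
      refine Finset.sum_le_sum fun ℓ _ => mul_le_mul_of_nonneg_left ?_ (le_of_lt (hβ ℓ))
      have h := euclid_norm_le_sum_abs (uBlk dd ℓ - dirD (ψ ℓ) z dd)
      exact h.trans (le_of_eq (Finset.sum_congr rfl fun i _ => rfl))
    have hstrict : ∑ ℓ : Fin L, Kg * (∏ p ∈ Finset.Ico ((ℓ:ℕ)+1) L, (1+K p))
          * ‖uBlk dd ℓ - dirD (ψ ℓ) z dd‖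
        < ∑ ℓ : Fin L, β ℓ * ‖uBlk dd ℓ - dirD (ψ ℓ) z dd‖ := by
      refine Finset.sum_lt_sum
        (fun ℓ _ => mul_le_mul_of_nonneg_right (le_of_lt (hT ℓ)) (norm_nonneg _))
        ⟨ℓ0, Finset.mem_univ _, mul_lt_mul_of_pos_right (hT ℓ0) hr0⟩
    have hgb : |dirD g (uOf z) (uOf dd) - dirD g (uOf z) (uOf (Dhat ψ z dd))|
        ≤ Kg * ∑ ℓ : Fin L, ‖uBlk dd ℓ - uBlk (Dhat ψ z dd) ℓ‖ :=
      (hgdLip (uOf dd) (uOf (Dhat ψ z dd))).trans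
        (mul_le_mul_of_nonneg_left (norm_uOf_sub_le dd (Dhat ψ z dd)) (le_of_lt hKg))
    have hKgE : Kg * ∑ ℓ : Fin L, ‖uBlk dd ℓ - uBlk (Dhat ψ z dd) ℓ‖
        ≤ ∑ ℓ : Fin L, Kg * (∏ p ∈ Finset.Ico ((ℓ:ℕ)+1) L, (1+K p))
            * ‖uBlk dd ℓ - dirD (ψ ℓ) z dd‖ := by
      calc Kg * ∑ ℓ : Fin L, ‖uBlk dd ℓ - uBlk (Dhat ψ z dd) ℓ‖
          ≤ Kg * ∑ ℓ : Fin L, (∏ p ∈ Finset.Ico ((ℓ:ℕ)+1) L, (1+K p))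
              * ‖uBlk dd ℓ - dirD (ψ ℓ) z dd‖ := mul_le_mul_of_nonneg_left hE (le_of_lt hKg)
        _ = _ := by
            rw [Finset.mul_sum]
            exact Finset.sum_congr rfl fun ℓ _ => by ring
    have hFdd_eq := hFdirD dd
    have hFdh_eq := hFdirD (Dhat ψ z dd)
    rw [thOf_Dhat ψ z dd] at hFdh_eq
    have habs := (abs_le.mp hgb).1
    rw [hThdirD dd]
    linarith [hFdh, habs, hKgE, hstrict, hPen, hFdd_eq, hFdh_eq]
  refine ⟨claim1, ?_⟩
  ext dd
  simp only [Set.mem_setOf_eq]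
  constructor
  · intro h0
    have hdT : dd ∈ tangentCone (Feas ψ) z := by
      by_contra hnot
      exact (ne_of_gt (claim1 dd hnot)) h0
    have hfix : ∀ ℓ, uBlk dd ℓ = dirD (ψ ℓ) z dd :=
      fun ℓ => tangent_fix ψ hψLip hψdd hzF hdT ℓ
    have hPen0 : (∑ ℓ, β ℓ * ∑ i, |uBlk dd ℓ i - dirD (ψ ℓ) z dd i|) = 0 :=
      Finset.sum_eq_zero fun ℓ _ => by
        rw [Finset.sum_eq_zero fun i _ => by rw [hfix ℓ]; simp, mul_zero]
    refine ⟨hdT, ?_⟩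
    rw [hThdirD dd, hPen0, add_zero] at h0
    rw [hFdirD dd]
    exact h0
  · rintro ⟨hdT, hF0⟩
    have hfix : ∀ ℓ, uBlk dd ℓ = dirD (ψ ℓ) z dd :=
      fun ℓ => tangent_fix ψ hψLip hψdd hzF hdT ℓ
    have hPen0 : (∑ ℓ, β ℓ * ∑ i, |uBlk dd ℓ i - dirD (ψ ℓ) z dd i|) = 0 :=
      Finset.sum_eq_zero fun ℓ _ => by
        rw [Finset.sum_eq_zero fun i _ => by rw [hfix ℓ]; simp, mul_zero]
    rw [hFdirD dd] at hF0
    rw [hThdirD dd, hPen0, add_zero]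
    exact hF0
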